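/- For each nonnegative integer n, the map 𝒵_n(Λ, z) = Φ_n(Λ)·z + Ψ_n(Λ)·ζ(Λ, z), where Φ_n and Ψ_n are the coefficients in the expansion of ℘ⁿ and ζ is the Weierstrass zeta function, is an elliptic zeta function of weight −2n+1: it is quasi-periodic with quasi-period map H_n(ω) = Φ_n(Λ)·ω + Ψ_n(Λ)·η_Λ(ω), it satisfies 𝒵_n(αΛ, αz) = α^{−2n+1}𝒵_n(Λ, z) for all α ∈ ℂ*, and for Λ_τ = ℤ + τℤ the quasi-periods H_n(1) and H_n(τ) are meromorphic functions of τ ∈ ℍ. -/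

import Mathlib

/-!
Quasi-periodicity is inherited from `ζ`. Since `g₂`, `g₃` and `ζ` are homogeneous of weights
`-4`, `-6` and `-1`, the recurrence makes `Φₙ` and `Ψₙ` homogeneous of weights `-2n` and
`-2n + 2`. On `Λ_τ = ℤ + τℤ`, `g₂` and `g₃` are Eisenstein series, holomorphic in `τ`, so the
recurrence also makes `Φₙ(Λ_τ)` and `Ψₙ(Λ_τ)` meromorphic. Finally, oddness of `ζ` gives
`η(ω) = ζ(ω)` for the regularised value of `ζ` at a lattice point `ω`: a lattice sum whose terms
are `O(‖x‖⁻³)` locally uniformly in `τ`, hence holomorphic in `τ`.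
-/

open Complex

noncomputable section

/-- The lattice `ω₁ℤ + ω₂ℤ` as a subset of `ℂ`. -/
def latticeSet (ω₁ ω₂ : ℂ) : Set ℂ := {z : ℂ | ∃ m n : ℤ, z = (m : ℂ) * ω₁ + (n : ℂ) * ω₂}

/-- A subset of `ℂ` is a lattice if it is generated by a basis `(ω₁, ω₂)` with
`Im (ω₂/ω₁) > 0`. -/
def IsLattice (Λ : Set ℂ) : Prop := ∃ ω₁ ω₂ : ℂ, 0 < (ω₂ / ω₁).im ∧ Λ = latticeSet ω₁ ω₂

/-- The Weierstrass zeta function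
`ζ(Λ, z) = 1/z + Σ_{ω ∈ Λ, ω ≠ 0} (1/(z-ω) + 1/ω + z/ω²)`. -/
def wzeta (Λ : Set ℂ) (z : ℂ) : ℂ :=
  z⁻¹ + ∑' w : {w : ℂ // w ∈ Λ ∧ w ≠ 0}, ((z - w.1)⁻¹ + (w.1)⁻¹ + z / w.1 ^ 2)

/-- `η` is a quasi-period map for the Weierstrass zeta function of `Λ`:
`ζ(Λ, z+ω) = ζ(Λ, z) + η(ω)` for all `z ∈ ℂ` and `ω ∈ Λ`. -/
def IsQuasiPeriod (Λ : Set ℂ) (η : ℂ → ℂ) : Prop :=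
  ∀ ω ∈ Λ, ∀ z : ℂ, wzeta Λ (z + ω) = wzeta Λ z + η ω

/-- The Eisenstein series `g₂(Λ) = 60 Σ_{ω ∈ Λ, ω ≠ 0} ω⁻⁴`. -/
def g2fun (Λ : Set ℂ) : ℂ := 60 * ∑' w : {w : ℂ // w ∈ Λ ∧ w ≠ 0}, (w.1 ^ 4)⁻¹

/-- The Eisenstein series `g₃(Λ) = 140 Σ_{ω ∈ Λ, ω ≠ 0} ω⁻⁶`. -/
def g3fun (Λ : Set ℂ) : ℂ := 140 * ∑' w : {w : ℂ // w ∈ Λ ∧ w ≠ 0}, (w.1 ^ 6)⁻¹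

/-- The three-term recurrence
`u_{n+1} = ((2n-1)/(4(2n+1))) g₂ u_{n-1} + ((n-1)/(2(2n+1))) g₃ u_{n-2}`. -/
def SatisfiesRec (Λ : Set ℂ) (u : ℤ → ℂ) : Prop :=
  ∀ n : ℤ, 1 ≤ n →
    u (n + 1) = (2 * (n : ℂ) - 1) / (4 * (2 * (n : ℂ) + 1)) * g2fun Λ * u (n - 1)
      + ((n : ℂ) - 1) / (2 * (2 * (n : ℂ) + 1)) * g3fun Λ * u (n - 2)

open Filter UpperHalfPlane

lemma tsum_nonzero_image_mul {Λ : Set ℂ} {α : ℂ} (hα : α ≠ 0) (f : ℂ → ℂ) :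
    ∑' w : {w : ℂ // w ∈ (fun w => α * w) '' Λ ∧ w ≠ 0}, f w
      = ∑' w : {w : ℂ // w ∈ Λ ∧ w ≠ 0}, f (α * w) :=
  ((Equiv.mulLeft₀ α hα).subtypeEquiv (fun w => by
    simp [(mul_right_injective₀ hα).mem_set_image, hα])).tsum_eq (fun w => f w.1) |>.symm

lemma g2fun_image_mul {Λ : Set ℂ} {α : ℂ} (hα : α ≠ 0) :
    g2fun ((fun w => α * w) '' Λ) = α ^ (-4 : ℤ) * g2fun Λ := by
  have hterm (w : ℂ) : ((α * w) ^ 4)⁻¹ = α ^ (-4 : ℤ) * (w ^ 4)⁻¹ := by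
    rw [mul_pow, mul_inv, zpow_neg, zpow_ofNat]
  rw [g2fun, g2fun, tsum_nonzero_image_mul hα (fun w => (w ^ 4)⁻¹)]
  simp_rw [hterm, tsum_mul_left]
  ring

lemma g3fun_image_mul {Λ : Set ℂ} {α : ℂ} (hα : α ≠ 0) :
    g3fun ((fun w => α * w) '' Λ) = α ^ (-6 : ℤ) * g3fun Λ := by
  have hterm (w : ℂ) : ((α * w) ^ 6)⁻¹ = α ^ (-6 : ℤ) * (w ^ 6)⁻¹ := by
    rw [mul_pow, mul_inv, zpow_neg, zpow_ofNat]
  rw [g3fun, g3fun, tsum_nonzero_image_mul hα (fun w => (w ^ 6)⁻¹)]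
  simp_rw [hterm, tsum_mul_left]
  ring

lemma wzeta_image_mul {Λ : Set ℂ} {α : ℂ} (hα : α ≠ 0) (z : ℂ) :
    wzeta ((fun w => α * w) '' Λ) (α * z) = α⁻¹ * wzeta Λ z := by
  have hterm (w : ℂ) : (α * z - α * w)⁻¹ + (α * w)⁻¹ + α * z / (α * w) ^ 2
      = α⁻¹ * ((z - w)⁻¹ + w⁻¹ + z / w ^ 2) := by
    rw [← mul_sub, mul_inv, mul_inv]
    field_simp
  rw [wzeta, wzeta, tsum_nonzero_image_mul hα (fun w => (α * z - w)⁻¹ + w⁻¹ + α * z / w ^ 2)]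
  simp_rw [hterm, tsum_mul_left, mul_inv, mul_add]

lemma image_mul_latticeSet (α ω₁ ω₂ : ℂ) :
    (fun w => α * w) '' latticeSet ω₁ ω₂ = latticeSet (α * ω₁) (α * ω₂) := by
  ext z
  constructor
  · rintro ⟨w, ⟨m, n, rfl⟩, rfl⟩
    exact ⟨m, n, by ring⟩
  · rintro ⟨m, n, rfl⟩
    exact ⟨m * ω₁ + n * ω₂, ⟨m, n, rfl⟩, by ring⟩

lemma IsLattice.image_mul {Λ : Set ℂ} (hΛ : IsLattice Λ) {α : ℂ} (hα : α ≠ 0) :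
    IsLattice ((fun w => α * w) '' Λ) := by
  obtain ⟨ω₁, ω₂, him, rfl⟩ := hΛ
  exact ⟨α * ω₁, α * ω₂, by rwa [mul_div_mul_left ω₂ ω₁ hα], image_mul_latticeSet α ω₁ ω₂⟩

lemma three_term_induction {P : ℤ → Prop} (hm1 : P (-1)) (h0 : P 0) (h1 : P 1)
    (hstep : ∀ n : ℤ, 1 ≤ n → P (n - 2) → P (n - 1) → P (n + 1)) (n : ℕ) : P n := by
  suffices ∀ n : ℕ, P (n - 1) ∧ P n ∧ P (n + 1) from (this n).2.1
  intro n
  induction n with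
  | zero => exact ⟨by simpa using hm1, h0, h1⟩
  | succ k ih =>
    obtain ⟨hkm1, hk, hk1⟩ := ih
    refine ⟨by simpa using hk, by simpa using hk1, ?_⟩
    have := hstep (k + 1) (by omega) (by simpa [sub_eq_add_neg, add_assoc] using hkm1)
      (by simpa using hk)
    simpa [add_assoc] using this

lemma SatisfiesRec.image_mul_eq_zpow_mul {Λ : Set ℂ} {α : ℂ} (hα : α ≠ 0) {u v : ℤ → ℂ}
    (hu : SatisfiesRec Λ u) (hv : SatisfiesRec ((fun w => α * w) '' Λ) v) (c : ℤ)
    (hm1 : v (-1) = α ^ (c + 2) * u (-1)) (h0 : v 0 = α ^ c * u 0)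
    (h1 : v 1 = α ^ (c - 2) * u 1) (n : ℕ) :
    v n = α ^ (-2 * (n : ℤ) + c) * u n := by
  refine three_term_induction (P := fun j => v j = α ^ (-2 * j + c) * u j)
    (by simpa [add_comm] using hm1) (by simpa using h0)
    (by simpa [add_comm, sub_eq_add_neg] using h1) (fun n hn ih2 ih1 => ?_) n
  have e4 : α ^ (-4 : ℤ) * α ^ (-2 * (n - 1) + c) = α ^ (-2 * (n + 1) + c) := by
    rw [← zpow_add₀ hα]; ring_nf
  have e6 : α ^ (-6 : ℤ) * α ^ (-2 * (n - 2) + c) = α ^ (-2 * (n + 1) + c) := by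
    rw [← zpow_add₀ hα]; ring_nf
  rw [hv n hn, hu n hn, g2fun_image_mul hα, g3fun_image_mul hα, ih1, ih2]
  linear_combination
    (2 * (n : ℂ) - 1) / (4 * (2 * (n : ℂ) + 1)) * g2fun Λ * u (n - 1) * e4
      + ((n : ℂ) - 1) / (2 * (2 * (n : ℂ) + 1)) * g3fun Λ * u (n - 2) * e6

lemma wzeta_zero (Λ : Set ℂ) : wzeta Λ 0 = 0 := by
  simp [wzeta]

lemma wzeta_neg {Λ : Set ℂ} (hΛ : ∀ w ∈ Λ, -w ∈ Λ) (z : ℂ) : wzeta Λ (-z) = -wzeta Λ z := by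
  let e : {w : ℂ // w ∈ Λ ∧ w ≠ 0} ≃ {w : ℂ // w ∈ Λ ∧ w ≠ 0} :=
    (Equiv.neg ℂ).subtypeEquiv fun w =>
      ⟨fun h => ⟨hΛ w h.1, neg_ne_zero.2 h.2⟩,
        fun h => ⟨by simpa using hΛ _ h.1, by simpa using h.2⟩⟩
  have hterm (w : ℂ) : (-z - -w)⁻¹ + (-w)⁻¹ + -z / (-w) ^ 2 = -((z - w)⁻¹ + w⁻¹ + z / w ^ 2) := by
    rw [← neg_sub', inv_neg, inv_neg, neg_sq, neg_div]
    ring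
  rw [wzeta, wzeta, ← e.tsum_eq]
  simp only [e, Equiv.subtypeEquiv_apply, Equiv.neg_apply]
  simp_rw [hterm, tsum_neg, inv_neg, neg_add]

/-- Since `0⁻¹ = 0`, at a lattice point `ω` the sum `wzeta Λ ω` is the constant term of the Laurent
expansion of `ζ` at `ω`; evaluating quasi-periodicity at `z = -ω` identifies it with `η ω`. -/
lemma IsQuasiPeriod.eq_wzeta {Λ : Set ℂ} {η : ℂ → ℂ} (hη : IsQuasiPeriod Λ η)
    (hΛ : ∀ w ∈ Λ, -w ∈ Λ) {ω : ℂ} (hω : ω ∈ Λ) : η ω = wzeta Λ ω := by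
  have h := hη ω hω (-ω)
  rw [neg_add_cancel, wzeta_zero, wzeta_neg hΛ] at h
  linear_combination -h

lemma neg_mem_latticeSet {ω₁ ω₂ w : ℂ} (hw : w ∈ latticeSet ω₁ ω₂) : -w ∈ latticeSet ω₁ ω₂ := by
  obtain ⟨m, n, rfl⟩ := hw
  exact ⟨-m, -n, by push_cast; ring⟩

lemma isLattice_latticeSet_one {τ : ℂ} (hτ : 0 < τ.im) : IsLattice (latticeSet 1 τ) :=
  ⟨1, τ, by rwa [div_one], rfl⟩

lemma SatisfiesRec.meromorphicOn {U : Set ℂ} (hU : IsOpen U) {Λ : ℂ → Set ℂ} {u : ℂ → ℤ → ℂ}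
    (hrec : ∀ τ ∈ U, SatisfiesRec (Λ τ) (u τ))
    (hg2 : MeromorphicOn (fun τ => g2fun (Λ τ)) U) (hg3 : MeromorphicOn (fun τ => g3fun (Λ τ)) U)
    {a b c : ℂ} (hbase : ∀ τ ∈ U, u τ (-1) = a ∧ u τ 0 = b ∧ u τ 1 = c) (n : ℕ) :
    MeromorphicOn (fun τ => u τ n) U := by
  refine three_term_induction (P := fun j => MeromorphicOn (fun τ => u τ j) U)
    ((MeromorphicOn.const a).congr (fun τ hτ => (hbase τ hτ).1.symm) hU)
    ((MeromorphicOn.const b).congr (fun τ hτ => (hbase τ hτ).2.1.symm) hU)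
    ((MeromorphicOn.const c).congr (fun τ hτ => (hbase τ hτ).2.2.symm) hU)
    (fun j hj ih2 ih1 => ?_) n
  refine MeromorphicOn.congr ?_ (fun τ hτ => (hrec τ hτ j hj).symm) hU
  exact (((MeromorphicOn.const _).fun_mul hg2).fun_mul ih1).fun_add
    (((MeromorphicOn.const _).fun_mul hg3).fun_mul ih2)

-- Coordinates ordered as in `EisensteinSeries`, whose lower bounds then apply verbatim.
def latticePoint (τ : ℂ) (x : Fin 2 → ℤ) : ℂ := x 0 * τ + x 1

lemma latticePoint_sub (τ : ℂ) (x y : Fin 2 → ℤ) :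
    latticePoint τ (x - y) = latticePoint τ x - latticePoint τ y := by
  simp only [latticePoint, Pi.sub_apply, Int.cast_sub]
  ring

lemma latticePoint_mem_latticeSet (τ : ℂ) (x : Fin 2 → ℤ) : latticePoint τ x ∈ latticeSet 1 τ :=
  ⟨x 1, x 0, by rw [latticePoint]; ring⟩

lemma differentiable_latticePoint (x : Fin 2 → ℤ) : Differentiable ℂ (latticePoint · x) :=
  (differentiable_id.const_mul _).add_const _

lemma latticePoint_ne_zero {τ : ℂ} (hτ : 0 < τ.im) {x : Fin 2 → ℤ} (hx : x ≠ 0) :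
    latticePoint τ x ≠ 0 :=
  norm_pos_iff.1 <| (mul_pos (EisensteinSeries.r_pos ⟨τ, hτ⟩) (norm_pos_iff.2 hx)).trans_le
    (EisensteinSeries.r_mul_max_le ⟨τ, hτ⟩ hx)

def nonzeroLatticePointEquiv {τ : ℂ} (hτ : 0 < τ.im) :
    {x : Fin 2 → ℤ // x ≠ 0} ≃ {w : ℂ // w ∈ latticeSet 1 τ ∧ w ≠ 0} :=
  Equiv.ofBijective
    (fun x => ⟨latticePoint τ x, latticePoint_mem_latticeSet τ x,
      latticePoint_ne_zero hτ x.2⟩) <| by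
    constructor
    · intro x y hxy
      by_contra hne
      refine latticePoint_ne_zero hτ (sub_ne_zero.2 (Subtype.coe_ne_coe.2 hne)) ?_
      rw [latticePoint_sub, sub_eq_zero]
      exact congrArg Subtype.val hxy
    · rintro ⟨w, ⟨m, n, rfl⟩, hw⟩
      refine ⟨⟨![n, m], fun h => hw ?_⟩, Subtype.ext ?_⟩
      · obtain ⟨rfl, rfl⟩ : n = 0 ∧ m = 0 := by simpa using congrFun h
        simp
      · simp only [latticePoint, Matrix.cons_val_zero, Matrix.cons_val_one, Matrix.cons_val_fin_one,
          mul_one]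
        ring

lemma tsum_latticeSet_one {τ : ℂ} (hτ : 0 < τ.im) (f : ℂ → ℂ) :
    ∑' w : {w : ℂ // w ∈ latticeSet 1 τ ∧ w ≠ 0}, f w
      = ∑' x : {x : Fin 2 → ℤ // x ≠ 0}, f (latticePoint τ x) :=
  ((nonzeroLatticePointEquiv hτ).tsum_eq (fun w => f w.1)).symm

lemma exists_pos_mul_norm_le_norm_latticePoint {K : Set ℂ} (hK : IsCompact K)
    (hKU : K ⊆ upperHalfPlaneSet) :
    ∃ r > 0, ∀ τ ∈ K, ∀ x : Fin 2 → ℤ, x ≠ 0 → r * ‖x‖ ≤ ‖latticePoint τ x‖ := by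
  have hK' : IsCompact (UpperHalfPlane.coe ⁻¹' K) :=
    isEmbedding_coe.isInducing.isCompact_preimage' hK (by rwa [range_coe])
  obtain ⟨A, B, hB, hKAB⟩ := subset_verticalStrip_of_isCompact hK'
  refine ⟨EisensteinSeries.r ⟨⟨A, B⟩, hB⟩, EisensteinSeries.r_pos _, fun τ hτ x hx => ?_⟩
  let z : ℍ := ⟨τ, hKU hτ⟩
  calc EisensteinSeries.r ⟨⟨A, B⟩, hB⟩ * ‖x‖ ≤ EisensteinSeries.r z * ‖x‖ := by
        gcongr
        exact EisensteinSeries.r_lower_bound_on_verticalStrip z hB (hKAB hτ)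
    _ ≤ ‖latticePoint τ x‖ := EisensteinSeries.r_mul_max_le z hx

lemma differentiableOn_tsum_of_norm_le_rpow {U : Set ℂ} (hU : IsOpen U)
    {F : {x : Fin 2 → ℤ // x ≠ 0} → ℂ → ℂ} (hF : ∀ x, DifferentiableOn ℂ (F x) U)
    {k : ℝ} (hk : 2 < k)
    (hbound : ∀ K ⊆ U, IsCompact K →
      ∃ C : ℝ, ∀ᶠ x in cofinite, ∀ τ ∈ K, ‖F x τ‖ ≤ C * ‖x.1‖ ^ (-k)) :
    DifferentiableOn ℂ (fun τ => ∑' x, F x τ) U := by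
  refine SummableLocallyUniformlyOn.differentiableOn hU
    (.of_locally_bounded_eventually hU fun K hKU hK => ?_)
    fun x τ hτ => (hF x).differentiableAt (hU.mem_nhds hτ)
  obtain ⟨C, hC⟩ := hbound K hKU hK
  exact ⟨_, ((EisensteinSeries.summable_one_div_norm_rpow hk).subtype _).mul_left C, hC⟩

lemma differentiableOn_tsum_inv_latticePoint_pow {k : ℕ} (hk : 3 ≤ k) :
    DifferentiableOn ℂ (fun τ => ∑' x : {x : Fin 2 → ℤ // x ≠ 0}, (latticePoint τ x ^ k)⁻¹)
      upperHalfPlaneSet := by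
  refine differentiableOn_tsum_of_norm_le_rpow isOpen_upperHalfPlaneSet (k := k)
    (fun x => ((differentiable_latticePoint x.1).pow k).differentiableOn.fun_inv
      fun τ hτ => pow_ne_zero _ (latticePoint_ne_zero hτ x.2))
    (by exact_mod_cast hk) fun K hKU hK => ?_
  obtain ⟨r, hr, hrK⟩ := exists_pos_mul_norm_le_norm_latticePoint hK hKU
  refine ⟨(r ^ k)⁻¹, .of_forall fun x τ hτ => ?_⟩
  have hx : 0 < ‖x.1‖ := norm_pos_iff.2 x.2
  rw [norm_inv, norm_pow, Real.rpow_neg (norm_nonneg _), Real.rpow_natCast, ← mul_inv, ← mul_pow]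
  gcongr
  exact hrK τ hτ x x.2

lemma differentiableOn_g2fun_latticeSet_one :
    DifferentiableOn ℂ (fun τ => g2fun (latticeSet 1 τ)) upperHalfPlaneSet :=
  ((differentiableOn_tsum_inv_latticePoint_pow (k := 4) (by norm_num)).const_mul 60).congr
    fun τ hτ => by rw [g2fun, tsum_latticeSet_one hτ (fun w => (w ^ 4)⁻¹)]

lemma differentiableOn_g3fun_latticeSet_one :
    DifferentiableOn ℂ (fun τ => g3fun (latticeSet 1 τ)) upperHalfPlaneSet :=
  ((differentiableOn_tsum_inv_latticePoint_pow (k := 6) (by norm_num)).const_mul 140).congr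
    fun τ hτ => by rw [g3fun, tsum_latticeSet_one hτ (fun w => (w ^ 6)⁻¹)]

lemma meromorphicOn_latticeSet_one_of_satisfiesRec {u : Set ℂ → ℤ → ℂ}
    (hrec : ∀ Λ : Set ℂ, IsLattice Λ → SatisfiesRec Λ (u Λ)) {a b c : ℂ}
    (hbase : ∀ Λ : Set ℂ, IsLattice Λ → u Λ (-1) = a ∧ u Λ 0 = b ∧ u Λ 1 = c) (n : ℕ) :
    MeromorphicOn (fun τ => u (latticeSet 1 τ) n) upperHalfPlaneSet :=
  SatisfiesRec.meromorphicOn isOpen_upperHalfPlaneSet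
    (fun _ hτ => hrec _ (isLattice_latticeSet_one hτ))
    (differentiableOn_g2fun_latticeSet_one.analyticOnNhd isOpen_upperHalfPlaneSet).meromorphicOn
    (differentiableOn_g3fun_latticeSet_one.analyticOnNhd isOpen_upperHalfPlaneSet).meromorphicOn
    (fun _ hτ => hbase _ (isLattice_latticeSet_one hτ)) n

lemma sub_inv_add_inv_add_div_sq {a w : ℂ} (hw : w ≠ 0) (haw : a - w ≠ 0) :
    (a - w)⁻¹ + w⁻¹ + a / w ^ 2 = a ^ 2 / (w ^ 2 * (a - w)) := by
  field_simp
  ring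

lemma differentiableOn_wzeta_summand (e x : Fin 2 → ℤ) (hx : x ≠ 0) :
    DifferentiableOn ℂ (fun τ => (latticePoint τ e - latticePoint τ x)⁻¹ + (latticePoint τ x)⁻¹
      + latticePoint τ e / latticePoint τ x ^ 2) upperHalfPlaneSet := by
  have hx_inv : DifferentiableOn ℂ (fun τ => (latticePoint τ x)⁻¹) upperHalfPlaneSet :=
    (differentiable_latticePoint x).differentiableOn.fun_inv
      fun τ hτ => latticePoint_ne_zero hτ hx
  have hdiv : DifferentiableOn ℂ (fun τ => latticePoint τ e / latticePoint τ x ^ 2)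
      upperHalfPlaneSet :=
    (differentiable_latticePoint e).differentiableOn.div
      ((differentiable_latticePoint x).pow 2).differentiableOn
      fun τ hτ => pow_ne_zero _ (latticePoint_ne_zero hτ hx)
  by_cases hxe : x = e
  · subst hxe
    simpa only [sub_self, inv_zero, zero_add] using hx_inv.fun_add hdiv
  · have hsub_inv : DifferentiableOn ℂ (fun τ => (latticePoint τ e - latticePoint τ x)⁻¹)
        upperHalfPlaneSet := by
      simp_rw [← latticePoint_sub]
      exact (differentiable_latticePoint _).differentiableOn.fun_inv
        fun τ hτ => latticePoint_ne_zero hτ (sub_ne_zero.2 (Ne.symm hxe))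
    exact (hsub_inv.fun_add hx_inv).fun_add hdiv

lemma tendsto_norm_nonzero_cofinite_atTop :
    Tendsto (fun x : {x : Fin 2 → ℤ // x ≠ 0} => ‖x.1‖) cofinite atTop :=
  tendsto_norm_cocompact_atTop.comp
    ((cocompact_eq_cofinite (Fin 2 → ℤ)).symm ▸ Subtype.val_injective.tendsto_cofinite)

lemma exists_eventually_norm_wzeta_summand_le (e : Fin 2 → ℤ) {K : Set ℂ} (hK : IsCompact K)
    (hKU : K ⊆ upperHalfPlaneSet) :
    ∃ C : ℝ, ∀ᶠ x : {x : Fin 2 → ℤ // x ≠ 0} in cofinite, ∀ τ ∈ K,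
      ‖(latticePoint τ e - latticePoint τ x)⁻¹ + (latticePoint τ x)⁻¹
        + latticePoint τ e / latticePoint τ x ^ 2‖ ≤ C * ‖x.1‖ ^ (-3 : ℝ) := by
  obtain ⟨r, hr, hrK⟩ := exists_pos_mul_norm_le_norm_latticePoint hK hKU
  obtain ⟨A, hA⟩ :=
    hK.exists_bound_of_continuousOn (differentiable_latticePoint e).continuous.continuousOn
  refine ⟨2 * A ^ 2 / r ^ 3,
    (tendsto_norm_nonzero_cofinite_atTop.eventually_gt_atTop (2 * ‖e‖)).mono fun x hx τ hτ => ?_⟩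
  have hx0 : 0 < ‖x.1‖ := norm_pos_iff.2 x.2
  have hex_norm : ‖x.1‖ / 2 ≤ ‖e - x.1‖ := by
    have := norm_sub_norm_le x.1 e
    rw [norm_sub_rev] at this
    linarith
  have hex : e - x.1 ≠ 0 := norm_pos_iff.1 (by linarith)
  have hw := hrK τ hτ x x.2
  have haw := hrK τ hτ _ hex
  rw [latticePoint_sub] at haw
  rw [sub_inv_add_inv_add_div_sq (latticePoint_ne_zero (hKU hτ) x.2)
    (latticePoint_sub τ e x ▸ latticePoint_ne_zero (hKU hτ) hex)]
  rw [norm_div, norm_mul, norm_pow, norm_pow, Real.rpow_neg hx0.le]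
  calc ‖latticePoint τ e‖ ^ 2 / (‖latticePoint τ x‖ ^ 2 * ‖latticePoint τ e - latticePoint τ x‖)
      ≤ A ^ 2 / ((r * ‖x.1‖) ^ 2 * (r * (‖x.1‖ / 2))) := by
        gcongr
        · exact hA τ hτ
        · exact (mul_le_mul_of_nonneg_left hex_norm hr.le).trans haw
    _ = 2 * A ^ 2 / r ^ 3 * (‖x.1‖ ^ (3 : ℝ))⁻¹ := by
        rw [Real.rpow_ofNat]
        field_simp

lemma differentiableOn_wzeta_latticePoint {e : Fin 2 → ℤ} (he : e ≠ 0) :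
    DifferentiableOn ℂ (fun τ => wzeta (latticeSet 1 τ) (latticePoint τ e)) upperHalfPlaneSet := by
  have hsum := differentiableOn_tsum_of_norm_le_rpow isOpen_upperHalfPlaneSet
    (fun x => differentiableOn_wzeta_summand e x.1 x.2) (by norm_num : (2 : ℝ) < 3)
    fun K hKU hK => exists_eventually_norm_wzeta_summand_le e hK hKU
  refine (((differentiable_latticePoint e).differentiableOn.fun_inv
    fun τ hτ => latticePoint_ne_zero hτ he).fun_add hsum).congr fun τ hτ => ?_
  rw [wzeta, tsum_latticeSet_one hτ
    (fun w => (latticePoint τ e - w)⁻¹ + w⁻¹ + latticePoint τ e / w ^ 2)]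

lemma meromorphicOn_quasiPeriod_latticePoint {η : ℂ → ℂ → ℂ}
    (hη : ∀ τ ∈ upperHalfPlaneSet, IsQuasiPeriod (latticeSet 1 τ) (η τ))
    {e : Fin 2 → ℤ} (he : e ≠ 0) :
    MeromorphicOn (fun τ => η τ (latticePoint τ e)) upperHalfPlaneSet :=
  ((differentiableOn_wzeta_latticePoint he).analyticOnNhd
    isOpen_upperHalfPlaneSet).meromorphicOn.congr
    (fun τ hτ => ((hη τ hτ).eq_wzeta (fun _ => neg_mem_latticeSet)
      (latticePoint_mem_latticeSet τ e)).symm) isOpen_upperHalfPlaneSet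

/-- for each nonnegative integer `n`, the map
`𝒵_n(Λ, z) = Φ_n(Λ) z + Ψ_n(Λ) ζ(Λ, z)` is an elliptic zeta function of weight
`-2n + 1`: it is quasi-periodic with quasi-period map
`H_n(ω) = Φ_n(Λ) ω + Ψ_n(Λ) η_Λ(ω)`, homogeneous of weight `-2n + 1`, and the
quasi-periods `H_n(1)` and `H_n(τ)` are meromorphic functions of `τ ∈ ℍ`. -/
theorem zn_is_ellipticZeta
    (Φ Ψ : Set ℂ → ℤ → ℂ)
    (hΦrec : ∀ Λ : Set ℂ, IsLattice Λ → SatisfiesRec Λ (Φ Λ))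
    (hΨrec : ∀ Λ : Set ℂ, IsLattice Λ → SatisfiesRec Λ (Ψ Λ))
    (hinit : ∀ Λ : Set ℂ, IsLattice Λ →
      Φ Λ (-1) = 0 ∧ Φ Λ 0 = 1 ∧ Φ Λ 1 = 0 ∧ Ψ Λ (-1) = 0 ∧ Ψ Λ 0 = 0 ∧ Ψ Λ 1 = -1)
    (η : Set ℂ → ℂ → ℂ) (hη : ∀ Λ : Set ℂ, IsLattice Λ → IsQuasiPeriod Λ (η Λ))
    (n : ℕ) :
    (∀ Λ : Set ℂ, IsLattice Λ → ∀ ω ∈ Λ, ∀ z : ℂ,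
      Φ Λ (n : ℤ) * (z + ω) + Ψ Λ (n : ℤ) * wzeta Λ (z + ω)
        = (Φ Λ (n : ℤ) * z + Ψ Λ (n : ℤ) * wzeta Λ z)
          + (Φ Λ (n : ℤ) * ω + Ψ Λ (n : ℤ) * η Λ ω)) ∧
    (∀ Λ : Set ℂ, IsLattice Λ → ∀ α : ℂ, α ≠ 0 → ∀ z : ℂ,
      Φ ((fun w => α * w) '' Λ) (n : ℤ) * (α * z)
          + Ψ ((fun w => α * w) '' Λ) (n : ℤ) * wzeta ((fun w => α * w) '' Λ) (α * z)
        = α ^ (-2 * (n : ℤ) + 1) * (Φ Λ (n : ℤ) * z + Ψ Λ (n : ℤ) * wzeta Λ z)) ∧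
    MeromorphicOn
      (fun τ : ℂ => Φ (latticeSet 1 τ) (n : ℤ) * 1
        + Ψ (latticeSet 1 τ) (n : ℤ) * η (latticeSet 1 τ) 1) {τ : ℂ | 0 < τ.im} ∧
    MeromorphicOn
      (fun τ : ℂ => Φ (latticeSet 1 τ) (n : ℤ) * τ
        + Ψ (latticeSet 1 τ) (n : ℤ) * η (latticeSet 1 τ) τ) {τ : ℂ | 0 < τ.im} := by
  have hΦ := meromorphicOn_latticeSet_one_of_satisfiesRec hΦrec
    (fun Λ hΛ => ⟨(hinit Λ hΛ).1, (hinit Λ hΛ).2.1, (hinit Λ hΛ).2.2.1⟩) n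
  have hΨ := meromorphicOn_latticeSet_one_of_satisfiesRec hΨrec (fun Λ hΛ => (hinit Λ hΛ).2.2.2) n
  have hH {e : Fin 2 → ℤ} (he : e ≠ 0) :=
    meromorphicOn_quasiPeriod_latticePoint (η := fun τ => η (latticeSet 1 τ))
      (fun τ hτ => hη _ (isLattice_latticeSet_one hτ)) he
  refine ⟨fun Λ hΛ ω hω z => by rw [hη Λ hΛ ω hω z]; ring, fun Λ hΛ α hα z => ?_, ?_, ?_⟩
  · obtain ⟨hΦm1, hΦ0, hΦ1, hΨm1, hΨ0, hΨ1⟩ := hinit Λ hΛ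
    obtain ⟨hΦm1', hΦ0', hΦ1', hΨm1', hΨ0', hΨ1'⟩ := hinit _ (hΛ.image_mul hα)
    rw [(hΦrec Λ hΛ).image_mul_eq_zpow_mul hα (hΦrec _ (hΛ.image_mul hα)) 0
        (by simp [hΦm1, hΦm1']) (by simp [hΦ0, hΦ0']) (by simp [hΦ1, hΦ1']) n,
      (hΨrec Λ hΛ).image_mul_eq_zpow_mul hα (hΨrec _ (hΛ.image_mul hα)) 2
        (by simp [hΨm1, hΨm1']) (by simp [hΨ0, hΨ0']) (by simp [hΨ1, hΨ1']) n,
      wzeta_image_mul hα, add_zero, zpow_add₀ hα, zpow_add₀ hα, zpow_one]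
    field_simp
  · simpa [latticePoint] using (hΦ.fun_mul (MeromorphicOn.const 1)).fun_add
      (hΨ.fun_mul (hH (e := ![0, 1]) (by simp)))
  · simpa [latticePoint] using (hΦ.fun_mul MeromorphicOn.id).fun_add
      (hΨ.fun_mul (hH (e := ![1, 0]) (by simp)))
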